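/- Let A be a unital associative ℚ-algebra containing elements x_{μν}, ∂_{μν} (1 ≤ μ,ν ≤ n) with x_{μν} = -x_{νμ}, ∂_{μν} = -∂_{νμ}, satisfying [x_{μν},x_{αβ}] = 0, [∂_{μν},∂_{αβ}] = 0, [∂_{μν},x_{αβ}] = δ_{μα}δ_{νβ} - δ_{μβ}δ_{να}. Let ∂ be the n×n matrix [∂_{μν}] with ordinary matrix powers ∂^m (entries in A; ∂⁰ = identity). Then for every m ≥ 1 and all indices α,β,ρ,σ: [x_{αβ}, (∂^m)_{ρσ}] = Σ_{p=1}^m (-1)^{p-1} ((∂^{m-p})_{ασ}(∂^{p-1})_{βρ} - (∂^{p-1})_{αρ}(∂^{m-p})_{βσ}). -/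
import Mathlib


/-- Kronecker delta with rational values. -/
def kd {n : ℕ} (a b : Fin n) : ℚ := if a = b then 1 else 0

/-- Ordinary matrix powers of the `n×n` matrix `∂ = [∂_{μν}]` with entries in `A`
(`∂⁰` is the identity matrix). -/
noncomputable def dpow {A : Type*} [Ring A] [Algebra ℚ A] {n : ℕ}
    (d : Fin n → Fin n → A) : ℕ → Fin n → Fin n → A
  | 0 => fun μ ν => (kd μ ν : ℚ) • (1 : A)
  | m+1 => fun μ ν => ∑ α, dpow d m μ α * d α ν

section aux
variable {A : Type*} [Ring A] [Algebra ℚ A] {n : ℕ} {d : Fin n → Fin n → A}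

lemma kd_symm (a b : Fin n) : kd a b = kd b a := by simp [kd, eq_comm]

lemma dpow_comm_d (hdd : ∀ μ ν α β, d μ ν * d α β - d α β * d μ ν = 0) :
    ∀ m (a b c e : Fin n), dpow d m a b * d c e = d c e * dpow d m a b := by
  intro m
  induction m with
  | zero => intro a b c e; simp [dpow, smul_mul_assoc, mul_smul_comm]
  | succ m ih =>
    intro a b c e
    simp only [dpow, Finset.sum_mul, Finset.mul_sum]
    refine Finset.sum_congr rfl fun γ _ => ?_
    have h2 : d γ b * d c e = d c e * d γ b := sub_eq_zero.mp (hdd γ b c e)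
    rw [mul_assoc, h2, ← mul_assoc, ih a γ c e, mul_assoc]

lemma dpow_succ_left :
    ∀ m (μ ν : Fin n), dpow d (m+1) μ ν = ∑ γ, d μ γ * dpow d m γ ν := by
  intro m
  induction m with
  | zero =>
    intro μ ν
    simp [dpow, kd, smul_mul_assoc, mul_smul_comm, ite_smul]
  | succ m ih =>
    intro μ ν
    show (∑ γ, dpow d (m+1) μ γ * d γ ν) = _
    calc ∑ γ, dpow d (m+1) μ γ * d γ ν
        = ∑ γ, (∑ δ, d μ δ * dpow d m δ γ) * d γ ν := by
          simp only [ih]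
      _ = ∑ δ, d μ δ * ∑ γ, dpow d m δ γ * d γ ν := by
          simp only [Finset.sum_mul, Finset.mul_sum, mul_assoc]
          rw [Finset.sum_comm]
      _ = ∑ δ, d μ δ * dpow d (m+1) δ ν := rfl

lemma dpow_transpose (hdanti : ∀ μ ν, d μ ν = - d ν μ)
    (hdd : ∀ μ ν α β, d μ ν * d α β - d α β * d μ ν = 0) :
    ∀ m (a b : Fin n), dpow d m a b = ((-1:ℚ)^m) • dpow d m b a := by
  intro m
  induction m with
  | zero => intro a b; simp [dpow, kd_symm a b]
  | succ m ih =>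
    intro a b
    rw [dpow_succ_left m b a]
    show (∑ γ, dpow d m a γ * d γ b) = _
    rw [Finset.smul_sum]
    refine Finset.sum_congr rfl fun γ _ => ?_
    rw [ih a γ, hdanti γ b, smul_mul_assoc, mul_neg, ← dpow_comm_d hdd m γ a b γ,
      pow_succ, mul_smul, neg_one_smul, smul_neg]

lemma dpow_one (a b : Fin n) : dpow d 1 a b = d a b := by
  show (∑ γ, dpow d 0 a γ * d γ b) = d a b
  simp [dpow, kd, ite_smul, smul_mul_assoc]

end aux

/-- Eq. (A10): in the generalized Heisenberg algebra `H_n`,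
`[x_{αβ}, (∂^m)_{ρσ}] = Σ_{p=1}^m (-1)^{p-1}((∂^{m-p})_{ασ}(∂^{p-1})_{βρ} - (∂^{p-1})_{αρ}(∂^{m-p})_{βσ})`. -/
theorem statement8 {A : Type*} [Ring A] [Algebra ℚ A]
    (n : ℕ) (hn : 2 ≤ n)
    (x d : Fin n → Fin n → A)
    (hxanti : ∀ μ ν, x μ ν = - x ν μ)
    (hdanti : ∀ μ ν, d μ ν = - d ν μ)
    (hxx : ∀ μ ν α β, x μ ν * x α β - x α β * x μ ν = 0)
    (hdd : ∀ μ ν α β, d μ ν * d α β - d α β * d μ ν = 0)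
    (hdx : ∀ μ ν α β, d μ ν * x α β - x α β * d μ ν
      = (kd μ α * kd ν β - kd μ β * kd ν α : ℚ) • (1 : A)) :
    ∀ (m : ℕ), 1 ≤ m → ∀ α β ρ σ : Fin n,
      x α β * dpow d m ρ σ - dpow d m ρ σ * x α β
        = ∑ p ∈ Finset.Icc 1 m, ((-1 : ℚ)^(p-1)) •
            (dpow d (m-p) α σ * dpow d (p-1) β ρ - dpow d (p-1) α ρ * dpow d (m-p) β σ) := by
  intro m hm
  induction m, hm using Nat.le_induction with
  | base =>
    intro α β ρ σ
    rw [dpow_one]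
    have h : x α β * d ρ σ - d ρ σ * x α β
        = -((kd ρ α * kd σ β - kd ρ β * kd σ α : ℚ) • (1 : A)) := by
      rw [← hdx ρ σ α β, neg_sub]
    rw [h]
    simp only [Finset.Icc_self, Finset.sum_singleton]
    show _ = ((-1:ℚ)^(0:ℕ)) • ((kd α σ • (1:A)) * (kd β ρ • (1:A))
        - (kd α ρ • (1:A)) * (kd β σ • (1:A)))
    rw [pow_zero, one_smul, smul_mul_smul_comm, smul_mul_smul_comm, mul_one, ← sub_smul, ← neg_smul]
    congr 1
    rw [kd_symm ρ α, kd_symm σ β, kd_symm ρ β, kd_symm σ α]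
    ring
  | succ m hm ih =>
    intro α β ρ σ
    have hA : ∀ p ∈ Finset.Icc 1 m,
        (∑ γ, (dpow d (m-p) α γ * dpow d (p-1) β ρ
            - dpow d (p-1) α ρ * dpow d (m-p) β γ) * d γ σ)
        = dpow d (m+1-p) α σ * dpow d (p-1) β ρ
            - dpow d (p-1) α ρ * dpow d (m+1-p) β σ := by
      intro p hp
      rw [Finset.mem_Icc] at hp
      have hmp : m + 1 - p = (m - p) + 1 := by omega
      rw [hmp]
      show _ = (∑ γ, dpow d (m-p) α γ * d γ σ) * dpow d (p-1) β ρ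
          - dpow d (p-1) α ρ * (∑ γ, dpow d (m-p) β γ * d γ σ)
      rw [Finset.sum_mul, Finset.mul_sum, ← Finset.sum_sub_distrib]
      refine Finset.sum_congr rfl fun γ _ => ?_
      rw [sub_mul, mul_assoc (dpow d (m-p) α γ), dpow_comm_d hdd (p-1) β ρ γ σ,
        ← mul_assoc, mul_assoc (dpow d (p-1) α ρ)]
    have hB : (∑ γ, dpow d m ρ γ * (x α β * d γ σ - d γ σ * x α β))
        = kd σ α • dpow d m ρ β - kd σ β • dpow d m ρ α := by
      have hterm : ∀ γ : Fin n, dpow d m ρ γ * (x α β * d γ σ - d γ σ * x α β)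
          = (kd γ β * kd σ α) • dpow d m ρ γ - (kd γ α * kd σ β) • dpow d m ρ γ := by
        intro γ
        have h : x α β * d γ σ - d γ σ * x α β
            = -((kd γ α * kd σ β - kd γ β * kd σ α : ℚ) • (1 : A)) := by
          rw [← hdx γ σ α β, neg_sub]
        rw [h, mul_neg, mul_smul_comm, mul_one, sub_smul, neg_sub]
      simp only [hterm]
      rw [Finset.sum_sub_distrib]
      congr 1
      · simp [kd, ite_mul, ite_smul]
      · simp [kd, ite_mul, ite_smul]
    have hC : kd σ α • dpow d m ρ β - kd σ β • dpow d m ρ α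
        = ((-1:ℚ)^(m+1-1)) • (dpow d (m+1-(m+1)) α σ * dpow d (m+1-1) β ρ
            - dpow d (m+1-1) α ρ * dpow d (m+1-(m+1)) β σ) := by
      simp only [Nat.add_sub_cancel, Nat.sub_self]
      rw [dpow_transpose hdanti hdd m ρ β, dpow_transpose hdanti hdd m ρ α,
        kd_symm σ α, kd_symm σ β]
      show _ = (-1:ℚ)^m • ((kd α σ • (1:A)) * dpow d m β ρ
          - dpow d m α ρ * (kd β σ • (1:A)))
      rw [smul_mul_assoc, one_mul, mul_smul_comm, mul_one]
      module
    calc x α β * dpow d (m+1) ρ σ - dpow d (m+1) ρ σ * x α β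
        = ∑ γ, (x α β * (dpow d m ρ γ * d γ σ) - (dpow d m ρ γ * d γ σ) * x α β) := by
          show x α β * (∑ γ, dpow d m ρ γ * d γ σ)
              - (∑ γ, dpow d m ρ γ * d γ σ) * x α β = _
          rw [Finset.mul_sum, Finset.sum_mul, ← Finset.sum_sub_distrib]
      _ = (∑ γ, (x α β * dpow d m ρ γ - dpow d m ρ γ * x α β) * d γ σ)
          + ∑ γ, dpow d m ρ γ * (x α β * d γ σ - d γ σ * x α β) := by
          rw [← Finset.sum_add_distrib]
          exact Finset.sum_congr rfl fun γ _ => by noncomm_ring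
      _ = (∑ p ∈ Finset.Icc 1 m, ((-1:ℚ)^(p-1)) •
            (dpow d (m+1-p) α σ * dpow d (p-1) β ρ
              - dpow d (p-1) α ρ * dpow d (m+1-p) β σ))
          + ((-1:ℚ)^(m+1-1)) • (dpow d (m+1-(m+1)) α σ * dpow d (m+1-1) β ρ
              - dpow d (m+1-1) α ρ * dpow d (m+1-(m+1)) β σ) := by
          rw [hB, hC]
          congr 1
          simp only [ih, Finset.sum_mul]
          rw [Finset.sum_comm]
          refine Finset.sum_congr rfl fun p hp => ?_
          simp only [smul_mul_assoc]
          rw [← Finset.smul_sum, hA p hp]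
      _ = _ := by
          rw [Finset.sum_Icc_succ_top (Nat.le_add_left 1 m)]
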